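/- Let u ∈ F_{s,R,M}, T a cell with stencil S, z = ℓ(u)+η ∈ ℝ⁹ the noisy 9 cell averages, ũ_T a minimizer over all half-plane indicators V₂ of ‖z−ℓ(v)‖_{ℓ¹}, and ū_S the best L¹(S) approximation of u from V₂. Then ‖u−ũ_T‖_{L¹(T)} ≤ (1+2C₀)‖u−ū_S‖_{L¹(S)} + 2C₀·9^{1−1/p}h²‖η‖_p, where C₀ is the absolute constant from the stencil inverse stability property. -/

import Mathlib

open MeasureTheory
open scoped RealInnerProductSpace BigOperators

noncomputable section

abbrev Plane := EuclideanSpace ℝ (Fin 2)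

def HolderBound (s R M : ℝ) (ψ : ℝ → ℝ) : Prop :=
  ContDiffOn ℝ (⌈s⌉₊ - 1 : ℕ) ψ (Set.Icc (-R) R) ∧
  (∀ j : ℕ, j ≤ ⌈s⌉₊ - 1 → ∀ t ∈ Set.Icc (-R) R,
    |iteratedDerivWithin j ψ (Set.Icc (-R) R) t| ≤ M) ∧
  (∀ a ∈ Set.Icc (-R) R, ∀ b ∈ Set.Icc (-R) R,
    |iteratedDerivWithin (⌈s⌉₊ - 1) ψ (Set.Icc (-R) R) a -
      iteratedDerivWithin (⌈s⌉₊ - 1) ψ (Set.Icc (-R) R) b|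
        ≤ M * |a - b| ^ (s - (⌈s⌉₊ - 1 : ℕ) : ℝ))

def unitSquare : Set Plane := {x | ∀ i, x i ∈ Set.Icc (0 : ℝ) 1}

def MemF (s R M : ℝ) (Ω : Set Plane) : Prop :=
  (∀ y ∈ Ω, ∀ i, y i ∈ Set.Icc R (1 - R)) ∧
  ∀ x ∈ unitSquare, ∃ e₁ e₂ : Plane, ⟪e₁, e₂⟫ = 0 ∧ ‖e₁‖ = 1 ∧ ‖e₂‖ = 1 ∧
    ∃ ψ : ℝ → ℝ, HolderBound s R M ψ ∧
      ∀ z₁ z₂ : ℝ, |z₁| ≤ R → |z₂| ≤ R →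
        ((x + z₁ • e₁ + z₂ • e₂) ∈ Ω ↔ z₂ ≤ ψ z₁)

def stencilCell (h : ℝ) (xb : Plane) (p : ℤ × ℤ) : Set Plane :=
  {y : Plane | |y 0 - (xb 0 + p.1 * h)| ≤ h / 2 ∧ |y 1 - (xb 1 + p.2 * h)| ≤ h / 2}

def stencil (h : ℝ) (xb : Plane) : Set Plane :=
  {y : Plane | |y 0 - xb 0| ≤ 3 * h / 2 ∧ |y 1 - xb 1| ≤ 3 * h / 2}

def cellAvg (h : ℝ) (xb : Plane) (p : ℤ × ℤ) (u : Plane → ℝ) : ℝ :=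
  (h ^ 2)⁻¹ * ∫ y in stencilCell h xb p, u y

def halfPlaneInd (xb : Plane) (nv : Plane) (c : ℝ) : Plane → ℝ :=
  Set.indicator {y : Plane | c ≤ nv 0 * (y 0 - xb 0) + nv 1 * (y 1 - xb 1)} fun _ => (1 : ℝ)

/-- The index set of the 9 cells of a 3×3 stencil. -/
def SIdx : Finset (ℤ × ℤ) := Finset.Icc ((-1 : ℤ), (-1 : ℤ)) (1, 1)

/-!
Write `ℓ` for the vector of the nine cell averages, `ū` for the half-plane indicator `nb, cb` and
`ũ` for the `ℓ¹` best fit `nt, ct`. Since the cells tile the stencil up to null sets,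
`h² ‖ℓ(u - ū)‖₁ ≤ ‖u - ū‖_{L¹(S)}`, and since `ũ` fits `z` at least as well as `ū`,
`‖ℓ(ũ - ū)‖₁ ≤ 2 (‖ℓ(u - ū)‖₁ + ‖η‖₁)`. By the triangle inequality it remains to bound
`‖ũ - ū‖_{L¹(T)}` by `C₀ h² ‖ℓ(ũ - ū)‖₁`. If both boundaries cross `T` this is inverse stability;
otherwise one of `ũ, ū` is constant (`0` or `1`) on `T`, so `ũ - ū` has a fixed sign there and
`‖ũ - ū‖_{L¹(T)} = h² |ℓ_T(ũ - ū)|`. Hölder's inequality `‖η‖₁ ≤ 9^{1-1/p} ‖η‖_p` finishes.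
-/

open Finset

theorem sum_abs_le_card_rpow_mul_Lp {ι : Type*} (s : Finset ι) {p : ℝ} (hp : 1 ≤ p) (a : ι → ℝ) :
    ∑ i ∈ s, |a i| ≤ (#s : ℝ) ^ (1 - 1 / p) * (∑ i ∈ s, |a i| ^ p) ^ (1 / p) := by
  simpa [one_div] using
    Real.inner_le_weight_mul_Lp_of_nonneg s hp (fun _ => 1) (fun i => |a i|)
      (fun _ => zero_le_one) (fun i => abs_nonneg (a i))

theorem sum_abs_sub_le_of_sum_abs_sub_le {ι : Type*} {s : Finset ι} {x η z y y' : ι → ℝ}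
    (hz : ∀ i ∈ s, z i = x i + η i)
    (hfit : ∑ i ∈ s, |z i - y i| ≤ ∑ i ∈ s, |z i - y' i|) :
    ∑ i ∈ s, |y i - y' i| ≤ 2 * (∑ i ∈ s, |x i - y' i| + ∑ i ∈ s, |η i|) := by
  have hz' : ∑ i ∈ s, |z i - y' i| ≤ ∑ i ∈ s, |x i - y' i| + ∑ i ∈ s, |η i| := by
    rw [← sum_add_distrib]
    refine sum_le_sum fun i hi => ?_
    rw [hz i hi, add_sub_right_comm]
    exact abs_add_le _ _
  calc ∑ i ∈ s, |y i - y' i| ≤ ∑ i ∈ s, (|z i - y i| + |z i - y' i|) :=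
        sum_le_sum fun i _ => abs_sub_comm (z i) (y i) ▸ abs_sub_le (y i) (z i) (y' i)
    _ ≤ 2 * (∑ i ∈ s, |x i - y' i| + ∑ i ∈ s, |η i|) := by
        rw [sum_add_distrib]; linarith

namespace MeasureTheory

variable {X : Type*} [MeasurableSpace X] {μ : Measure X}

theorem integral_abs_eq_abs_integral {f : X → ℝ} (hf : 0 ≤ᵐ[μ] f ∨ f ≤ᵐ[μ] 0) :
    ∫ x, |f x| ∂μ = |∫ x, f x ∂μ| := by
  rcases hf with hf | hf
  · rw [abs_of_nonneg (integral_nonneg_of_ae hf)]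
    exact integral_congr_ae (hf.mono fun x hx => abs_of_nonneg hx)
  · rw [abs_of_nonpos (integral_nonpos_of_ae hf), ← integral_neg]
    exact integral_congr_ae (hf.mono fun x hx => abs_of_nonpos hx)

theorem setIntegral_abs_sub_eq_of_eqOn_zero_or_one {T : Set X} (hT : MeasurableSet T)
    {f g : X → ℝ} (hf : IntegrableOn f T μ) (hg : IntegrableOn g T μ)
    (hf01 : ∀ x, f x ∈ Set.Icc 0 1) (hgT : Set.EqOn g 0 T ∨ Set.EqOn g 1 T) :
    ∫ x in T, |f x - g x| ∂μ = |∫ x in T, f x ∂μ - ∫ x in T, g x ∂μ| := by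
  rw [← integral_sub hf hg]
  refine integral_abs_eq_abs_integral ?_
  rcases hgT with hgT | hgT
  · left
    filter_upwards [ae_restrict_mem hT] with x hx
    simpa [hgT hx] using (hf01 x).1
  · right
    filter_upwards [ae_restrict_mem hT] with x hx
    simpa [hgT hx] using (hf01 x).2

theorem integral_abs_sub_le_add {f g k : X → ℝ} (hf : Integrable f μ) (hg : Integrable g μ)
    (hk : Integrable k μ) :
    ∫ x, |f x - k x| ∂μ ≤ ∫ x, |f x - g x| ∂μ + ∫ x, |k x - g x| ∂μ := by
  refine (integral_mono (hf.sub hk).abs ((hf.sub hg).abs.add (hk.sub hg).abs) fun x => ?_).trans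
    (integral_add (hf.sub hg).abs (hk.sub hg).abs).le
  have := abs_sub_le (f x) (g x) (k x)
  rwa [abs_sub_comm (g x)] at this

theorem sum_setIntegral_le_setIntegral {ι : Type*} {s : Finset ι} {t : ι → Set X} {S : Set X}
    {f : X → ℝ} (hf : ∀ x, 0 ≤ f x) (hfS : IntegrableOn f S μ)
    (ht : ∀ i, NullMeasurableSet (t i) μ) (hd : Pairwise fun i j => AEDisjoint μ (t i) (t j))
    (htS : ∀ i ∈ s, t i ⊆ S) :
    ∑ i ∈ s, ∫ x in t i, f x ∂μ ≤ ∫ x in S, f x ∂μ := by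
  have hU : ⋃ i : s, t i ⊆ S := Set.iUnion_subset fun i => htS i i.2
  calc ∑ i ∈ s, ∫ x in t i, f x ∂μ = ∑' i : s, ∫ x in t i, f x ∂μ := by
        rw [tsum_fintype, sum_coe_sort s fun i => ∫ x in t i, f x ∂μ]
    _ = ∫ x in ⋃ i : s, t i, f x ∂μ :=
        (integral_iUnion_ae (s := fun i : s => t i) (fun i => ht i)
          (fun i j hij => hd (Subtype.coe_ne_coe.mpr hij)) (hfS.mono_set hU)).symm
    _ ≤ ∫ x in S, f x ∂μ := setIntegral_mono_set hfS (ae_of_all _ hf) hU.eventuallyLE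

end MeasureTheory

theorem Set.indicator_one_mem_Icc {α : Type*} (s : Set α) (x : α) :
    s.indicator (fun _ => (1 : ℝ)) x ∈ Set.Icc 0 1 := by
  by_cases hx : x ∈ s <;> simp [hx]

theorem EuclideanSpace.volume_setOf_apply_eq {ι : Type*} [Fintype ι] (i : ι) (c : ℝ) :
    volume {y : EuclideanSpace ℝ ι | y i = c} = 0 :=
  (PiLp.volume_preserving_ofLp ι).quasiMeasurePreserving.preimage_null
    (Measure.pi_eval_preimage_null _ (Real.volume_singleton (a := c)))

theorem eq_of_abs_sub_le_of_abs_sub_le {h a t : ℝ} (hh : 0 < h) {k k' : ℤ} (hk : k ≠ k')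
    (ht : |t - (a + k * h)| ≤ h / 2) (ht' : |t - (a + k' * h)| ≤ h / 2) :
    t = a + min k k' * h + h / 2 := by
  wlog hlt : k < k' generalizing k k'
  · rw [min_comm]
    exact this hk.symm ht' ht (lt_of_le_of_ne (not_lt.mp hlt) hk.symm)
  have hkk' : (k : ℝ) + 1 ≤ k' := by exact_mod_cast hlt
  rw [min_eq_left hlt.le]
  have := abs_le.mp ht
  have := abs_le.mp ht'
  nlinarith

section Stencil

variable {h : ℝ} {xb : Plane}

theorem measurableSet_stencilCell (q : ℤ × ℤ) : MeasurableSet (stencilCell h xb q) := by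
  unfold stencilCell
  measurability

theorem aedisjoint_stencilCell (hh : 0 < h) {q q' : ℤ × ℤ} (hne : q ≠ q') :
    AEDisjoint volume (stencilCell h xb q) (stencilCell h xb q') := by
  by_cases h1 : q.1 = q'.1
  · have h2 : q.2 ≠ q'.2 := fun h2 => hne (Prod.ext h1 h2)
    refine measure_mono_null (fun y hy => ?_)
      (EuclideanSpace.volume_setOf_apply_eq 1 (xb 1 + min q.2 q'.2 * h + h / 2))
    exact_mod_cast eq_of_abs_sub_le_of_abs_sub_le hh h2 hy.1.2 hy.2.2
  · refine measure_mono_null (fun y hy => ?_)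
      (EuclideanSpace.volume_setOf_apply_eq 0 (xb 0 + min q.1 q'.1 * h + h / 2))
    exact_mod_cast eq_of_abs_sub_le_of_abs_sub_le hh h1 hy.1.1 hy.2.1

theorem stencilCell_subset_stencil (hh : 0 < h) {q : ℤ × ℤ} (hq : q ∈ SIdx) :
    stencilCell h xb q ⊆ stencil h xb := by
  obtain ⟨⟨ha, hb⟩, hc, hd⟩ := Finset.mem_Icc.mp hq
  have ha : (-1 : ℝ) ≤ q.1 := by exact_mod_cast ha
  have hb : (-1 : ℝ) ≤ q.2 := by exact_mod_cast hb
  have hc : (q.1 : ℝ) ≤ 1 := by exact_mod_cast hc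
  have hd : (q.2 : ℝ) ≤ 1 := by exact_mod_cast hd
  rintro y ⟨hy0, hy1⟩
  have := abs_le.mp hy0
  have := abs_le.mp hy1
  constructor <;> apply abs_le.mpr <;> constructor <;> nlinarith

theorem volume_stencil_lt_top : volume (stencil h xb) < ⊤ := by
  have hsub : stencil h xb ⊆ WithLp.ofLp ⁻¹'
      Set.Icc (fun i => xb i - 3 * h / 2) (fun i => xb i + 3 * h / 2) := by
    rintro y ⟨hy0, hy1⟩
    have := abs_le.mp hy0
    have := abs_le.mp hy1
    constructor <;> intro i <;> fin_cases i <;> simp <;> linarith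
  refine (measure_mono hsub).trans_lt ?_
  rw [(PiLp.volume_preserving_ofLp (Fin 2)).measure_preimage measurableSet_Icc.nullMeasurableSet]
  exact measure_Icc_lt_top

end Stencil

section CellAverages

variable {h : ℝ} {xb : Plane}

theorem sq_mul_abs_cellAvg_sub (hh : h ≠ 0) (q : ℤ × ℤ) (f g : Plane → ℝ) :
    h ^ 2 * |cellAvg h xb q f - cellAvg h xb q g|
      = |(∫ y in stencilCell h xb q, f y) - ∫ y in stencilCell h xb q, g y| := by
  rw [cellAvg, cellAvg, ← mul_sub, abs_mul, abs_inv, abs_sq,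
    mul_inv_cancel_left₀ (pow_ne_zero 2 hh)]

theorem sq_mul_sum_abs_cellAvg_sub_le (hh : 0 < h) {f g : Plane → ℝ}
    (hf : IntegrableOn f (stencil h xb)) (hg : IntegrableOn g (stencil h xb)) :
    h ^ 2 * ∑ q ∈ SIdx, |cellAvg h xb q f - cellAvg h xb q g|
      ≤ ∫ y in stencil h xb, |f y - g y| := by
  rw [Finset.mul_sum]
  refine (Finset.sum_le_sum fun q hq => ?_).trans
    (sum_setIntegral_le_setIntegral (fun y => abs_nonneg (f y - g y)) (hf.sub hg).abs
      (fun q => (measurableSet_stencilCell q).nullMeasurableSet)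
      (fun q q' hne => aedisjoint_stencilCell hh hne) fun q hq => stencilCell_subset_stencil hh hq)
  have hcell := stencilCell_subset_stencil (xb := xb) hh hq
  rw [sq_mul_abs_cellAvg_sub hh.ne', ← integral_sub (hf.mono_set hcell) (hg.mono_set hcell)]
  exact abs_integral_le_integral_abs

end CellAverages

section HalfPlanes

variable {h : ℝ} {xb : Plane}

/-- The boundary line of `halfPlaneInd xb n c` meets the central cell `stencilCell h xb (0, 0)`
(the paper's class `V_{2,T}`). -/
def HalfPlaneCrossesCell (h : ℝ) (n : Plane) (c : ℝ) : Prop :=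
  |c| ≤ h / 2 * (|n 0| + |n 1|)

theorem measurableSet_halfPlane (n : Plane) (c : ℝ) :
    MeasurableSet {y : Plane | c ≤ n 0 * (y 0 - xb 0) + n 1 * (y 1 - xb 1)} := by
  measurability

theorem integrableOn_halfPlaneInd (n : Plane) (c : ℝ) :
    IntegrableOn (halfPlaneInd xb n c) (stencil h xb) :=
  (integrableOn_const volume_stencil_lt_top.ne).indicator (measurableSet_halfPlane n c)

theorem abs_linear_le_of_mem_centerCell (n : Plane) {y : Plane}
    (hy : y ∈ stencilCell h xb (0, 0)) :
    |n 0 * (y 0 - xb 0) + n 1 * (y 1 - xb 1)| ≤ h / 2 * (|n 0| + |n 1|) := by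
  obtain ⟨hy0, hy1⟩ := hy
  simp only [Int.cast_zero, zero_mul, add_zero] at hy0 hy1
  calc |n 0 * (y 0 - xb 0) + n 1 * (y 1 - xb 1)|
      ≤ |n 0| * |y 0 - xb 0| + |n 1| * |y 1 - xb 1| := by
        rw [← abs_mul, ← abs_mul]; exact abs_add_le _ _
    _ ≤ |n 0| * (h / 2) + |n 1| * (h / 2) := by gcongr
    _ = h / 2 * (|n 0| + |n 1|) := by ring

theorem halfPlaneInd_eqOn_zero_or_one {n : Plane} {c : ℝ} (hc : ¬HalfPlaneCrossesCell h n c) :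
    Set.EqOn (halfPlaneInd xb n c) 0 (stencilCell h xb (0, 0)) ∨
      Set.EqOn (halfPlaneInd xb n c) 1 (stencilCell h xb (0, 0)) := by
  rw [HalfPlaneCrossesCell, not_le] at hc
  unfold halfPlaneInd
  rcases lt_or_ge 0 c with hc0 | hc0
  · refine Or.inl fun y hy => Set.indicator_of_notMem ?_ _
    have := abs_linear_le_of_mem_centerCell n hy
    rw [Set.mem_ofPred_eq, not_le]
    linarith [le_abs_self (n 0 * (y 0 - xb 0) + n 1 * (y 1 - xb 1)), abs_of_pos hc0]
  · refine Or.inr fun y hy => Set.indicator_of_mem ?_ _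
    have := abs_linear_le_of_mem_centerCell n hy
    rw [Set.mem_ofPred_eq]
    linarith [neg_abs_le (n 0 * (y 0 - xb 0) + n 1 * (y 1 - xb 1)), abs_of_nonpos hc0]

theorem setIntegral_centerCell_abs_sub_halfPlaneInd_le (hh : 0 < h) {C₀ : ℝ} (hC₀ : 1 ≤ C₀)
    {nu nv : Plane} {cu cv : ℝ}
    (hstab : HalfPlaneCrossesCell h nu cu → HalfPlaneCrossesCell h nv cv →
      (∫ y in stencil h xb, |halfPlaneInd xb nu cu y - halfPlaneInd xb nv cv y|)
        ≤ C₀ * h ^ 2 * ∑ q ∈ SIdx,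
            |cellAvg h xb q (halfPlaneInd xb nu cu) - cellAvg h xb q (halfPlaneInd xb nv cv)|) :
    (∫ y in stencilCell h xb (0, 0), |halfPlaneInd xb nu cu y - halfPlaneInd xb nv cv y|)
      ≤ C₀ * h ^ 2 * ∑ q ∈ SIdx,
          |cellAvg h xb q (halfPlaneInd xb nu cu) - cellAvg h xb q (halfPlaneInd xb nv cv)| := by
  set f := halfPlaneInd xb nu cu
  set g := halfPlaneInd xb nv cv
  have h00 : ((0, 0) : ℤ × ℤ) ∈ SIdx := by decide
  have hT := stencilCell_subset_stencil (xb := xb) hh h00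
  have hfS : IntegrableOn f (stencil h xb) := integrableOn_halfPlaneInd nu cu
  have hgS : IntegrableOn g (stencil h xb) := integrableOn_halfPlaneInd nv cv
  by_cases hcross : HalfPlaneCrossesCell h nu cu ∧ HalfPlaneCrossesCell h nv cv
  · refine le_trans ?_ (hstab hcross.1 hcross.2)
    exact setIntegral_mono_set (hfS.sub hgS).abs (ae_of_all _ fun y => abs_nonneg _)
      hT.eventuallyLE
  have hf := hfS.mono_set hT
  have hg := hgS.mono_set hT
  have hcell : (∫ y in stencilCell h xb (0, 0), |f y - g y|)
      = h ^ 2 * |cellAvg h xb (0, 0) f - cellAvg h xb (0, 0) g| := by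
    rw [sq_mul_abs_cellAvg_sub hh.ne']
    rcases not_and_or.mp hcross with hu | hv
    · simpa only [abs_sub_comm] using setIntegral_abs_sub_eq_of_eqOn_zero_or_one
        (measurableSet_stencilCell _) hg hf (Set.indicator_one_mem_Icc _)
        (halfPlaneInd_eqOn_zero_or_one hu)
    · exact setIntegral_abs_sub_eq_of_eqOn_zero_or_one (measurableSet_stencilCell _) hf hg
        (Set.indicator_one_mem_Icc _) (halfPlaneInd_eqOn_zero_or_one hv)
  rw [hcell]
  calc h ^ 2 * |cellAvg h xb (0, 0) f - cellAvg h xb (0, 0) g|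
      ≤ h ^ 2 * ∑ q ∈ SIdx, |cellAvg h xb q f - cellAvg h xb q g| := by
        gcongr
        exact Finset.single_le_sum (f := fun q => |cellAvg h xb q f - cellAvg h xb q g|)
          (fun q _ => abs_nonneg _) h00
    _ ≤ C₀ * h ^ 2 * ∑ q ∈ SIdx, |cellAvg h xb q f - cellAvg h xb q g| := by
        rw [mul_assoc]
        exact le_mul_of_one_le_left (by positivity) hC₀

end HalfPlanes

theorem local_recovery_bound_general
    (h : ℝ) (hh : 0 < h) (xb : Plane)
    (Ω : Set Plane) (hΩmeas : MeasurableSet Ω)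
    (u : Plane → ℝ) (hu : u = Set.indicator Ω fun _ => (1 : ℝ))
    (p : ℝ) (hp : 1 ≤ p)
    (C₀ : ℝ) (hC₀1 : 1 ≤ C₀)
    (hC₀ : ∀ (nu nv : Plane) (cu cv : ℝ), ‖nu‖ = 1 → ‖nv‖ = 1 →
      |cu| ≤ h / 2 * (|nu 0| + |nu 1|) → |cv| ≤ h / 2 * (|nv 0| + |nv 1|) →
      (∫ y in stencil h xb, |halfPlaneInd xb nu cu y - halfPlaneInd xb nv cv y|)
        ≤ C₀ * h ^ 2 * ∑ q ∈ SIdx,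
            |cellAvg h xb q (halfPlaneInd xb nu cu) - cellAvg h xb q (halfPlaneInd xb nv cv)|)
    (η z : ℤ × ℤ → ℝ) (hz : ∀ q ∈ SIdx, z q = cellAvg h xb q u + η q)
    (nt : Plane) (ct : ℝ) (hnt : ‖nt‖ = 1)
    (htmin : ∀ (nv : Plane) (c : ℝ), ‖nv‖ = 1 →
      ∑ q ∈ SIdx, |z q - cellAvg h xb q (halfPlaneInd xb nt ct)|
        ≤ ∑ q ∈ SIdx, |z q - cellAvg h xb q (halfPlaneInd xb nv c)|)
    (nb : Plane) (cb : ℝ) (hnb : ‖nb‖ = 1) :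
    (∫ y in stencilCell h xb (0, 0), |u y - halfPlaneInd xb nt ct y|)
      ≤ (1 + 2 * C₀) * (∫ y in stencil h xb, |u y - halfPlaneInd xb nb cb y|)
        + 2 * C₀ * (9 : ℝ) ^ (1 - 1 / p) * h ^ 2 * (∑ q ∈ SIdx, |η q| ^ p) ^ (1 / p) := by
  have hT := stencilCell_subset_stencil (xb := xb) hh (by decide : ((0, 0) : ℤ × ℤ) ∈ SIdx)
  have hu_int : IntegrableOn u (stencil h xb) :=
    hu ▸ (integrableOn_const volume_stencil_lt_top.ne).indicator hΩmeas
  have hut := integrableOn_halfPlaneInd (h := h) (xb := xb) nt ct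
  have hub := integrableOn_halfPlaneInd (h := h) (xb := xb) nb cb
  have hdata := sq_mul_sum_abs_cellAvg_sub_le hh hu_int hub
  have hnoise :
      ∑ q ∈ SIdx, |η q| ≤ (9 : ℝ) ^ (1 - 1 / p) * (∑ q ∈ SIdx, |η q| ^ p) ^ (1 / p) := by
    simpa [show SIdx.card = 9 by decide] using sum_abs_le_card_rpow_mul_Lp SIdx hp η
  have hfit := sum_abs_sub_le_of_sum_abs_sub_le hz (htmin nb cb hnb)
  have hcell := setIntegral_centerCell_abs_sub_halfPlaneInd_le hh hC₀1 (hC₀ nt nb ct cb hnt hnb)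
  have hC₀h : 0 ≤ C₀ * h ^ 2 := by positivity
  calc (∫ y in stencilCell h xb (0, 0), |u y - halfPlaneInd xb nt ct y|)
      ≤ (∫ y in stencilCell h xb (0, 0), |u y - halfPlaneInd xb nb cb y|)
        + ∫ y in stencilCell h xb (0, 0), |halfPlaneInd xb nt ct y - halfPlaneInd xb nb cb y| :=
        integral_abs_sub_le_add (hu_int.mono_set hT) (hub.mono_set hT) (hut.mono_set hT)
    _ ≤ (∫ y in stencil h xb, |u y - halfPlaneInd xb nb cb y|) + C₀ * h ^ 2 * (2 *
          (∑ q ∈ SIdx, |cellAvg h xb q u - cellAvg h xb q (halfPlaneInd xb nb cb)|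
            + ∑ q ∈ SIdx, |η q|)) := by
        gcongr ?_ + ?_
        · exact setIntegral_mono_set (hu_int.sub hub).abs (ae_of_all _ fun _ => abs_nonneg _)
            hT.eventuallyLE
        · exact hcell.trans (mul_le_mul_of_nonneg_left hfit hC₀h)
    _ ≤ _ := by nlinarith [mul_le_mul_of_nonneg_left hnoise hC₀h]

/-- **Local recovery bound on a cell** (Lemma 5.1): if `ũ_T` is an `ℓ¹` best fit to the
noisy stencil cell averages `z = ℓ(u) + η` among all half-plane indicators `V₂`, and
`ū_S` is a best `L¹(S)` approximation of `u` from `V₂`, then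
`‖u − ũ_T‖_{L¹(T)} ≤ (1 + 2C₀)‖u − ū_S‖_{L¹(S)} + 2C₀ · 9^{1−1/p} h² ‖η‖_p`,
where `C₀ ≥ 1` is the absolute constant of the stencil inverse stability property. -/
theorem local_recovery_bound
    (s R M : ℝ) (hs : 1 ≤ s) (hM : 0 < M)
    (h : ℝ) (hh : 0 < h) (xb : Plane) (hS : stencil h xb ⊆ unitSquare)
    (Ω : Set Plane) (hΩmeas : MeasurableSet Ω) (hΩ : MemF s R M Ω)
    (u : Plane → ℝ) (hu : u = Set.indicator Ω fun _ => (1 : ℝ))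
    (p : ℝ) (hp : 1 ≤ p)
    (C₀ : ℝ) (hC₀1 : 1 ≤ C₀)
    (hC₀ : ∀ (nu nv : Plane) (cu cv : ℝ), ‖nu‖ = 1 → ‖nv‖ = 1 →
      |cu| ≤ h / 2 * (|nu 0| + |nu 1|) → |cv| ≤ h / 2 * (|nv 0| + |nv 1|) →
      (∫ y in stencil h xb, |halfPlaneInd xb nu cu y - halfPlaneInd xb nv cv y|)
        ≤ C₀ * h ^ 2 * ∑ q ∈ SIdx,
            |cellAvg h xb q (halfPlaneInd xb nu cu) - cellAvg h xb q (halfPlaneInd xb nv cv)|)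
    (η z : ℤ × ℤ → ℝ) (hz : ∀ q ∈ SIdx, z q = cellAvg h xb q u + η q)
    (nt : Plane) (ct : ℝ) (hnt : ‖nt‖ = 1)
    (htmin : ∀ (nv : Plane) (c : ℝ), ‖nv‖ = 1 →
      ∑ q ∈ SIdx, |z q - cellAvg h xb q (halfPlaneInd xb nt ct)|
        ≤ ∑ q ∈ SIdx, |z q - cellAvg h xb q (halfPlaneInd xb nv c)|)
    (nb : Plane) (cb : ℝ) (hnb : ‖nb‖ = 1)
    (hbmin : ∀ (nv : Plane) (c : ℝ), ‖nv‖ = 1 →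
      (∫ y in stencil h xb, |u y - halfPlaneInd xb nb cb y|)
        ≤ ∫ y in stencil h xb, |u y - halfPlaneInd xb nv c y|) :
    (∫ y in stencilCell h xb (0, 0), |u y - halfPlaneInd xb nt ct y|)
      ≤ (1 + 2 * C₀) * (∫ y in stencil h xb, |u y - halfPlaneInd xb nb cb y|)
        + 2 * C₀ * (9 : ℝ) ^ (1 - 1 / p) * h ^ 2 * (∑ q ∈ SIdx, |η q| ^ p) ^ (1 / p) :=
  local_recovery_bound_general h hh xb Ω hΩmeas u hu p hp C₀ hC₀1 hC₀ η z hz nt ct hnt htmin nb cb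
    hnb

end
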